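/- arXiv:2012.11518 — 5 statements merged into one kernel-verified Lean document; each statement's English description precedes it below -/
import Mathlib

section
/- Let d ≥ 1 and let n_c be an integer with 1 ≤ n_c ≤ d. Let g ∈ ℝ^d have g_i ≠ 0 for every i. Let |g|_(1) ≥ |g|_(2) ≥ … ≥ |g|_(d) denote the decreasing rearrangement of (|g_1|, …, |g_d|), and let k be the smallest integer in {0, 1, …, n_c − 1} such that |g|_(k+1) · (n_c − k) ≤ Σ_{i=k+1}^d |g|_(i) (such a k exists). Let S_k be a set of k coordinates carrying the k largest values of |g_i| (consistent with the rearrangement), and define p ∈ ℝ^d by p_i = 1 for i ∈ S_k and p_i = |g_i| (n_c − k) / Σ_{j ∉ S_k} |g_j| for i ∉ S_k. Then p is feasible, i.e. 0 < p_i ≤ 1 for every i and Σ_{i=1}^d p_i ≤ n_c, and p minimizes the sparsification variance: for every q ∈ ℝ^d with 0 < q_i ≤ 1 for every i and Σ_{i=1}^d q_i ≤ n_c, one has Σ_{i=1}^d g_i²/p_i ≤ Σ_{i=1}^d g_i²/q_i. -/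
open Finset

noncomputable section

/-! The given `p` is the KKT point of the convex problem `min Σ g_i² / p_i` subject to
`Σ p_i ≤ n_c`, `p_i ≤ 1`: with multiplier `c = (R / (n_c - k))²`, where `R` is the mass of
`|g|` outside the top `k` coordinates, one has `g_i² / p_i² = c` off the top coordinates and
`p_i = 1`, `g_i² ≥ c` on them. The minimality of `k` is exactly the inequality `g_i² ≥ c` on the
top coordinates, and the threshold condition at `k` is `p_i ≤ 1` off them. Optimality then
follows from the tangent-line inequality for the convex functions `x ↦ g_i² / x`. -/

theorem div_add_div_sq_mul_sub_le_div {a p q : ℝ} (ha : 0 ≤ a) (hp : 0 < p) (hq : 0 < q) :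
    a / p + a / p ^ 2 * (p - q) ≤ a / q := by
  have hgap : a / q - (a / p + a / p ^ 2 * (p - q)) = a * (p - q) ^ 2 / (p ^ 2 * q) := by
    field_simp
    ring
  have : 0 ≤ a * (p - q) ^ 2 / (p ^ 2 * q) := by positivity
  linarith

theorem sum_sq_div_le_of_kkt {ι : Type*} [Fintype ι] (g p q : ι → ℝ) {c : ℝ} (hc : 0 ≤ c)
    (hp : ∀ i, 0 < p i) (hq : ∀ i, 0 < q i ∧ q i ≤ 1) (hsum : ∑ i, q i ≤ ∑ i, p i)
    (hkkt : ∀ i, g i ^ 2 / p i ^ 2 = c ∨ (p i = 1 ∧ c ≤ g i ^ 2)) :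
    ∑ i, g i ^ 2 / p i ≤ ∑ i, g i ^ 2 / q i := by
  have slope (i : ι) : c * (p i - q i) ≤ g i ^ 2 / p i ^ 2 * (p i - q i) := by
    rcases hkkt i with h | ⟨hp1, hcg⟩
    · rw [h]
    · simpa [hp1] using mul_le_mul_of_nonneg_right hcg (sub_nonneg.2 (hq i).2)
  calc ∑ i, g i ^ 2 / p i
      ≤ ∑ i, g i ^ 2 / p i + c * (∑ i, p i - ∑ i, q i) :=
        le_add_of_nonneg_right (mul_nonneg hc (sub_nonneg.2 hsum))
    _ = ∑ i, (g i ^ 2 / p i + c * (p i - q i)) := by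
        rw [sum_add_distrib, ← sum_sub_distrib, mul_sum]
    _ ≤ ∑ i, (g i ^ 2 / p i + g i ^ 2 / p i ^ 2 * (p i - q i)) :=
        sum_le_sum fun i _ => (add_le_add_iff_left _).2 (slope i)
    _ ≤ ∑ i, g i ^ 2 / q i :=
        sum_le_sum fun i _ => div_add_div_sq_mul_sub_le_div (sq_nonneg _) (hp i) (hq i).1

section CappedProbs

variable {ι : Type*} [Fintype ι] [DecidableEq ι] (s : Finset ι) (g : ι → ℝ) (m : ℝ)

def cappedProbs (i : ι) : ℝ :=
  if i ∈ s then 1 else |g i| * m / ∑ j ∈ sᶜ, |g j|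

variable {s g m}

theorem cappedProbs_pos (hg : ∀ i, g i ≠ 0) (hm : 0 < m) (hR : 0 < ∑ j ∈ sᶜ, |g j|) (i : ι) :
    0 < cappedProbs s g m i := by
  unfold cappedProbs
  split_ifs
  · exact one_pos
  · exact div_pos (mul_pos (abs_pos.2 (hg i)) hm) hR

theorem cappedProbs_le_one (hR : 0 < ∑ j ∈ sᶜ, |g j|)
    (hbelow : ∀ i ∉ s, |g i| * m ≤ ∑ j ∈ sᶜ, |g j|) (i : ι) :
    cappedProbs s g m i ≤ 1 := by
  unfold cappedProbs
  split_ifs with hi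
  · exact le_rfl
  · exact (div_le_one hR).2 (hbelow i hi)

theorem sum_cappedProbs (hR : ∑ j ∈ sᶜ, |g j| ≠ 0) :
    ∑ i, cappedProbs s g m i = #s + m := by
  rw [← sum_add_sum_compl s]
  have htop : ∑ i ∈ s, cappedProbs s g m i = #s := by
    simp +contextual [cappedProbs]
  have hrest : ∑ i ∈ sᶜ, cappedProbs s g m i = m := by
    have hoff (i : ι) (hi : i ∈ sᶜ) : cappedProbs s g m i = |g i| * m / ∑ j ∈ sᶜ, |g j| :=
      if_neg (mem_compl.1 hi)
    rw [sum_congr rfl hoff, ← sum_div, ← sum_mul]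
    field_simp
  rw [htop, hrest]

theorem cappedProbs_kkt (hg : ∀ i, g i ≠ 0) (hm : 0 < m) (hR : 0 < ∑ j ∈ sᶜ, |g j|)
    (habove : ∀ i ∈ s, ∑ j ∈ sᶜ, |g j| ≤ |g i| * m) (i : ι) :
    g i ^ 2 / cappedProbs s g m i ^ 2 = ((∑ j ∈ sᶜ, |g j|) / m) ^ 2 ∨
      (cappedProbs s g m i = 1 ∧ ((∑ j ∈ sᶜ, |g j|) / m) ^ 2 ≤ g i ^ 2) := by
  unfold cappedProbs
  split_ifs with hi
  · refine Or.inr ⟨rfl, ?_⟩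
    rw [← sq_abs (g i)]
    exact pow_le_pow_left₀ (div_nonneg hR.le hm.le) ((div_le_iff₀ hm).2 (habove i hi)) 2
  · left
    have := hg i
    rw [div_pow, mul_pow, sq_abs]
    field_simp

end CappedProbs

section TopSet

variable {ι : Type*} [Fintype ι] {d : ℕ}

def topSet (e : Fin d ≃ ι) (k : ℕ) : Finset ι := univ.filter fun i => (e.symm i : ℕ) < k

@[simp]
theorem mem_topSet {e : Fin d ≃ ι} {k : ℕ} {i : ι} : i ∈ topSet e k ↔ (e.symm i : ℕ) < k := by
  simp [topSet]

theorem card_topSet (e : Fin d ≃ ι) {k : ℕ} (hk : k ≤ d) : #(topSet e k) = k := by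
  rw [card_equiv e.symm (t := univ.filter fun j : Fin d => (j : ℕ) < k) (by simp),
    Fin.card_filter_val_lt, min_eq_right hk]

theorem compl_topSet [DecidableEq ι] (e : Fin d ≃ ι) (k : ℕ) :
    (topSet e k)ᶜ = univ.filter fun i => k ≤ (e.symm i : ℕ) := by
  ext i
  simp

theorem sum_compl_topSet [DecidableEq ι] {M : Type*} [AddCommMonoid M] (e : Fin d ≃ ι) (k : ℕ)
    (f : ι → M) :
    ∑ i ∈ (topSet e k)ᶜ, f i = ∑ j ∈ univ.filter (fun j : Fin d => k ≤ (j : ℕ)), f (e j) :=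
  sum_equiv e.symm (by simp) (by simp)

variable {α : Type*} [Preorder α] {f : ι → α} {e : Fin d ≃ ι} {k : ℕ} {i : ι}

theorem apply_le_of_notMem_topSet (hf : Antitone (f ∘ e)) (hk : k < d) (hi : i ∉ topSet e k) :
    f i ≤ f (e ⟨k, hk⟩) := by
  simpa using hf (Fin.le_def.2 (not_lt.1 (mem_topSet.not.1 hi)) : ⟨k, hk⟩ ≤ e.symm i)

theorem apply_le_of_mem_topSet_succ (hf : Antitone (f ∘ e)) (hk : k < d)
    (hi : i ∈ topSet e (k + 1)) : f (e ⟨k, hk⟩) ≤ f i := by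
  simpa using hf (Fin.le_def.2 (Nat.lt_succ_iff.1 (mem_topSet.1 hi)) : e.symm i ≤ ⟨k, hk⟩)

end TopSet

theorem Fin.sum_filter_le_eq_add {M : Type*} [AddCommMonoid M] {d k : ℕ} (hk : k < d)
    (f : Fin d → M) :
    ∑ i ∈ univ.filter (fun i : Fin d => k ≤ (i : ℕ)), f i =
      f ⟨k, hk⟩ + ∑ i ∈ univ.filter (fun i : Fin d => k + 1 ≤ (i : ℕ)), f i := by
  rw [← sum_insert (by simp)]
  congr 1
  ext i
  simp only [mem_filter, mem_univ, true_and, mem_insert, Fin.ext_iff]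
  omega

/-- **Optimality of the importance-sampling probabilities (Proposition 1).**
Given `g ∈ ℝ^d` with all coordinates nonzero, a sorting permutation `τ` putting `|g|`
in decreasing order, and the smallest `k ∈ {0, …, n_c − 1}` such that
`|g|_(k+1) (n_c − k) ≤ Σ_{i=k+1}^d |g|_(i)`, the probability vector `p` defined by
`p_i = 1` on the top-`k` set and `p_i = |g_i|(n_c − k) / Σ_{j ∉ S_k} |g_j|` elsewhere
is feasible and minimizes the sparsification variance `Σ_i g_i² / p_i` over all
feasible probability vectors. -/
theorem optimal_sparsification_probabilities
    (d nc : ℕ) (hncd : nc ≤ d)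
    (g : Fin d → ℝ) (hg : ∀ i, g i ≠ 0)
    (τ : Equiv.Perm (Fin d))
    (hsort : ∀ i j : Fin d, i ≤ j → |g (τ j)| ≤ |g (τ i)|)
    (k : ℕ) (hk : k < nc)
    (hcond : |g (τ ⟨k, lt_of_lt_of_le hk hncd⟩)| * ((nc : ℝ) - (k : ℝ))
        ≤ ∑ i ∈ Finset.univ.filter (fun i : Fin d => k ≤ (i : ℕ)), |g (τ i)|)
    (hmin : ∀ k' : ℕ, ∀ hk' : k' < k,
      ¬ (|g (τ ⟨k', by omega⟩)| * ((nc : ℝ) - (k' : ℝ))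
        ≤ ∑ i ∈ Finset.univ.filter (fun i : Fin d => k' ≤ (i : ℕ)), |g (τ i)|))
    (p : Fin d → ℝ)
    (hp : ∀ i : Fin d, p i =
      if ((τ.symm i : Fin d) : ℕ) < k then 1
      else |g i| * ((nc : ℝ) - (k : ℝ)) /
        ∑ j ∈ Finset.univ.filter (fun j : Fin d => k ≤ ((τ.symm j : Fin d) : ℕ)), |g j|) :
    (∀ i, 0 < p i ∧ p i ≤ 1) ∧ (∑ i, p i ≤ (nc : ℝ)) ∧
      (∀ q : Fin d → ℝ, (∀ i, 0 < q i ∧ q i ≤ 1) → (∑ i, q i ≤ (nc : ℝ)) →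
        ∑ i, (g i) ^ 2 / p i ≤ ∑ i, (g i) ^ 2 / q i) := by
  have hkd : k < d := hk.trans_le hncd
  set s := topSet τ k
  obtain rfl : p = cappedProbs s g (nc - k) := funext fun i => by
    simp only [hp i, cappedProbs, s, mem_topSet, compl_topSet]
  clear hp
  have hm : (0 : ℝ) < nc - k := sub_pos.2 (by exact_mod_cast hk)
  have hR : ∑ j ∈ sᶜ, |g j| = ∑ i ∈ univ.filter (fun i : Fin d => k ≤ (i : ℕ)), |g (τ i)| :=
    sum_compl_topSet τ k _
  have hRpos : 0 < ∑ j ∈ sᶜ, |g j| := hR ▸ (mul_pos (abs_pos.2 (hg _)) hm).trans_le hcond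
  have hbelow (i : Fin d) (hi : i ∉ s) : |g i| * (nc - k) ≤ ∑ j ∈ sᶜ, |g j| := by
    have hgi := apply_le_of_notMem_topSet (f := fun x => |g x|) hsort hkd hi
    exact hR ▸ (mul_le_mul_of_nonneg_right hgi hm.le).trans hcond
  have habove (i : Fin d) (hi : i ∈ s) : ∑ j ∈ sᶜ, |g j| ≤ |g i| * (nc - k) := by
    obtain ⟨k', rfl⟩ : ∃ k', k = k' + 1 := Nat.exists_eq_add_one.2 (Nat.zero_lt_of_lt (mem_topSet.1 hi))
    have hgi := apply_le_of_mem_topSet_succ (f := fun x => |g x|) hsort (by omega) hi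
    have hfail := not_le.1 (hmin k' k'.lt_succ_self)
    rw [Fin.sum_filter_le_eq_add (by omega), ← hR] at hfail
    have hscaled := mul_le_mul_of_nonneg_right hgi hm.le
    push_cast at hscaled hfail ⊢
    linarith
  have hsum : ∑ i, cappedProbs s g (nc - k) i = nc := by
    rw [sum_cappedProbs hRpos.ne', card_topSet τ hkd.le]
    ring
  exact ⟨fun i => ⟨cappedProbs_pos hg hm hRpos i, cappedProbs_le_one hRpos hbelow i⟩, hsum.le,
    fun q hq hqsum => sum_sq_div_le_of_kkt g _ q (sq_nonneg _) (cappedProbs_pos hg hm hRpos) hq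
      (hqsum.trans_eq hsum.symm) (cappedProbs_kkt hg hm hRpos habove)⟩
end
end

section
/- Let f : ℝ^d → ℝ be L-smooth and μ_c > 0, and define the full coordinate-wise gradient estimate Ĉf(x) := Σ_{i=1}^d ((f(x + μ_c e_i) − f(x − μ_c e_i))/(2 μ_c)) e_i, where e_1, …, e_d is the standard basis. Then for every x ∈ ℝ^d: ⟨−∇f(x), Ĉf(x)⟩ ≤ −(3/4) ‖∇f(x)‖² + L² d μ_c². -/
open MeasureTheory Finset
open scoped RealInnerProductSpace ENNReal

noncomputable section

/-- Euclidean space `ℝ^d`. -/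
abbrev Euc (d : ℕ) := EuclideanSpace ℝ (Fin d)

/-- `g : ℝ^d → ℝ` is `L`-smooth: differentiable with `L`-Lipschitz gradient. -/
def LSmooth {d : ℕ} (g : Euc d → ℝ) (L : ℝ) : Prop :=
  Differentiable ℝ g ∧ ∀ x y, ‖gradient g x - gradient g y‖ ≤ L * ‖x - y‖

/-- The uniform probability distribution on the unit sphere of `ℝ^d`, realized as the
pushforward of the normalized Lebesgue measure on the unit ball under radial projection. -/
def sphereUniform (d : ℕ) : Measure (Euc d) :=
  Measure.map (fun x => ‖x‖⁻¹ • x)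
    ((volume (Metric.ball (0 : Euc d) 1))⁻¹ • volume.restrict (Metric.ball (0 : Euc d) 1))

/-- First-order Taylor bound for `L`-smooth functions. -/
lemma taylor_bound_aux {d : ℕ} (L : ℝ) (hL : 0 ≤ L) (f : Euc d → ℝ) (hf : LSmooth f L) (x y : Euc d) :
    |f y - f x - ⟪gradient f x, y - x⟫| ≤ L * ‖y - x‖ ^ 2 := by
  obtain ⟨hdiff, hlip⟩ := hf
  have hfderiv : ∀ z : Euc d, fderiv ℝ f z
      = (InnerProductSpace.toDual ℝ (Euc d)) (gradient f z) := by
    intro z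
    rw [gradient, LinearIsometryEquiv.apply_symm_apply]
  have key : ‖f y - f x - (fderiv ℝ f x) (y - x)‖ ≤ (L * ‖y - x‖) * ‖y - x‖ := by
    apply Convex.norm_image_sub_le_of_norm_fderiv_le' (s := segment ℝ x y)
      (fun z _ => hdiff z)
      ?_ (convex_segment x y) (left_mem_segment ℝ x y) (right_mem_segment ℝ x y)
    intro z hz
    have h1 : ‖fderiv ℝ f z - fderiv ℝ f x‖ = ‖gradient f z - gradient f x‖ := by
      rw [hfderiv z, hfderiv x, ← map_sub, LinearIsometryEquiv.norm_map]
    rw [h1]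
    refine (hlip z x).trans ?_
    have hz' : ‖z - x‖ ≤ ‖y - x‖ := by
      obtain ⟨a, b, ha, hb, hab, rfl⟩ := hz
      have : a • x + b • y - x = b • (y - x) := by
        rw [smul_sub]
        have hab' : a = 1 - b := by linarith
        rw [hab', sub_smul, one_smul]; abel
      rw [this, norm_smul, Real.norm_eq_abs, abs_of_nonneg hb]
      nlinarith [norm_nonneg (y - x)]
    exact mul_le_mul_of_nonneg_left hz' hL
  have happ : (fderiv ℝ f x) (y - x) = ⟪gradient f x, y - x⟫ := by
    rw [hfderiv x, InnerProductSpace.toDual_apply_apply]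
  calc |f y - f x - ⟪gradient f x, y - x⟫|
      = ‖f y - f x - (fderiv ℝ f x) (y - x)‖ := by rw [happ]; rfl
    _ ≤ (L * ‖y - x‖) * ‖y - x‖ := key
    _ = L * ‖y - x‖ ^ 2 := by ring

/-- **Proposition 3, second bound:** for `L`-smooth `f` and the full coordinate-wise
gradient estimate `Ĉf(x)`, one has
`⟨−∇f(x), Ĉf(x)⟩ ≤ −(3/4)‖∇f(x)‖² + L² d μ_c²`. -/
theorem inner_prod_bound_cge
    (d : ℕ) (hd : 1 ≤ d) (L μc : ℝ) (hL : 0 ≤ L) (hμc : 0 < μc)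
    (f : Euc d → ℝ) (hf : LSmooth f L) (x : Euc d) :
    ⟪-(gradient f x),
      ∑ i : Fin d, ((f (x + μc • EuclideanSpace.single i (1:ℝ))
          - f (x - μc • EuclideanSpace.single i (1:ℝ))) / (2 * μc)) •
        EuclideanSpace.single i (1:ℝ)⟫
      ≤ -(3 / 4) * ‖gradient f x‖ ^ 2 + L ^ 2 * (d : ℝ) * μc ^ 2 := by
  set g := gradient f x with hg
  set c : Fin d → ℝ := fun i =>
    (f (x + μc • EuclideanSpace.single i (1:ℝ))
      - f (x - μc • EuclideanSpace.single i (1:ℝ))) / (2 * μc) with hc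
  -- componentwise bound
  have hcomp : ∀ i : Fin d, |c i - g i| ≤ L * μc := by
    intro i
    set e : Euc d := EuclideanSpace.single i (1:ℝ) with he
    have hnorm_e : ‖e‖ = 1 := by simp [he]
    have hinner_e : ⟪g, e⟫ = g i := by
      rw [he, EuclideanSpace.inner_single_right]; simp
    have h1 : |f (x + μc • e) - f x - μc * g i| ≤ L * μc ^ 2 := by
      have := taylor_bound_aux L hL f hf x (x + μc • e)
      simp only [add_sub_cancel_left] at this
      rw [real_inner_smul_right, hinner_e] at this
      simpa [norm_smul, abs_of_pos hμc, hnorm_e, mul_pow] using this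
    have h2 : |f (x - μc • e) - f x + μc * g i| ≤ L * μc ^ 2 := by
      have := taylor_bound_aux L hL f hf x (x - μc • e)
      simp only [sub_sub_cancel_left] at this
      rw [inner_neg_right, real_inner_smul_right, hinner_e] at this
      simpa [norm_neg, norm_smul, abs_of_pos hμc, hnorm_e, mul_pow, sub_neg_eq_add] using this
    have hceq : c i - g i
        = ((f (x + μc • e) - f x - μc * g i) - (f (x - μc • e) - f x + μc * g i)) / (2 * μc) := by
      rw [hc]
      field_simp
      ring
    rw [hceq, abs_div, abs_of_pos (by linarith : (0:ℝ) < 2 * μc)]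
    rw [div_le_iff₀ (by linarith : (0:ℝ) < 2 * μc)]
    calc |(f (x + μc • e) - f x - μc * g i) - (f (x - μc • e) - f x + μc * g i)|
        ≤ |f (x + μc • e) - f x - μc * g i| + |f (x - μc • e) - f x + μc * g i| :=
          abs_sub _ _
      _ ≤ L * μc ^ 2 + L * μc ^ 2 := add_le_add h1 h2
      _ = L * μc * (2 * μc) := by ring
  -- rewrite the inner product as a sum
  have hinner : ⟪-g, ∑ i : Fin d, c i • EuclideanSpace.single i (1:ℝ)⟫
      = ∑ i : Fin d, -(g i * c i) := by
    rw [inner_sum]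
    refine Finset.sum_congr rfl fun i _ => ?_
    rw [real_inner_smul_right, inner_neg_left]
    have h : ⟪g, EuclideanSpace.single i (1:ℝ)⟫ = g i := by
      rw [EuclideanSpace.inner_single_right]; simp
    rw [h]; ring
  have hnorm : ‖g‖ ^ 2 = ∑ i : Fin d, g i ^ 2 := by
    rw [← real_inner_self_eq_norm_sq, PiLp.inner_apply]
    refine Finset.sum_congr rfl fun i _ => ?_
    simp [RCLike.inner_apply, sq]
  rw [hinner, hnorm]
  have hterm : ∀ i : Fin d, -(g i * c i) ≤ -(3/4) * g i ^ 2 + L ^ 2 * μc ^ 2 := by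
    intro i
    have h := hcomp i
    have h' := abs_le.mp h
    nlinarith [sq_nonneg (g i / 2 + (c i - g i)), sq_nonneg (g i), abs_nonneg (c i - g i),
      sq_nonneg (L * μc - |c i - g i|), sq_abs (c i - g i), neg_abs_le (g i), le_abs_self (g i),
      mul_le_mul_of_nonneg_left h (abs_nonneg (g i)), abs_mul (g i) (c i - g i),
      neg_abs_le (g i * (c i - g i)), le_abs_self (g i * (c i - g i)), sq_nonneg (|g i|/2 - 2 * L * μc)]
  calc ∑ i : Fin d, -(g i * c i)
      ≤ ∑ i : Fin d, (-(3/4) * g i ^ 2 + L ^ 2 * μc ^ 2) := Finset.sum_le_sum fun i _ => hterm i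
    _ = -(3/4) * ∑ i : Fin d, g i ^ 2 + L ^ 2 * (d : ℝ) * μc ^ 2 := by
        rw [Finset.sum_add_distrib, ← Finset.mul_sum, Finset.sum_const, Finset.card_univ]
        simp [mul_comm, mul_assoc, mul_left_comm]
end
end

section
/- Under the stochastic setting and the CGE definition with μ_{c,i} = μ_c for all i, for every x ∈ ℝ^d: E‖G_c(x)‖² ≤ Σ_{i=1}^d (1/p_i) [ 2 (∂_i f(x))² + 3ζ²/b_c + (L² μ_c²/2)(1 + 3/b_c) ]. -/
open MeasureTheory Finset
open scoped RealInnerProductSpace ENNReal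

noncomputable section

/-- Sample space measure for the RGE: `b_r` i.i.d. data samples from `P` together with
`b_r × n_r` i.i.d. uniform directions on the unit sphere, all independent. -/
def RGEmeas (d : ℕ) {Ω : Type} [MeasurableSpace Ω] (P : Measure Ω) (nr br : ℕ) :
    Measure ((Fin br → Ω) × (Fin br → Fin nr → Euc d)) :=
  (Measure.pi fun _ => P).prod (Measure.pi fun _ => Measure.pi fun _ => sphereUniform d)

/-- The random gradient estimator (RGE) at `x`, as a function of the sampled
data batch `ω.1` and sampled random directions `ω.2`. -/
def RGE {d : ℕ} {Ω : Type} (F : Euc d → Ω → ℝ) (μr : ℝ) (nr br : ℕ)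
    (x : Euc d) (ω : (Fin br → Ω) × (Fin br → Fin nr → Euc d)) : Euc d :=
  (br : ℝ)⁻¹ • ∑ j : Fin br, (nr : ℝ)⁻¹ • ∑ i : Fin nr,
    (((d : ℝ) / μr) * (F (x + μr • ω.2 j i) (ω.1 j) - F x (ω.1 j))) • ω.2 j i

/-- Bernoulli measure on `Bool` with success probability `p`. -/
def bern (p : ℝ) : Measure Bool :=
  ENNReal.ofReal p • Measure.dirac true + ENNReal.ofReal (1 - p) • Measure.dirac false

/-- Sample space measure for the CGE: independent Bernoulli coordinate-selection variables
`Z_i ~ Bern(p_i)` together with an independent i.i.d. data batch of size `b_c` from `P`. -/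
def CGEmeas (d : ℕ) {Ω : Type} [MeasurableSpace Ω] (P : Measure Ω) (bc : ℕ) (p : Fin d → ℝ) :
    Measure ((Fin d → Bool) × (Fin bc → Ω)) :=
  (Measure.pi fun i => bern (p i)).prod (Measure.pi fun _ => P)

/-- The importance-sampled coordinate-wise gradient estimator (CGE) at `x`, with
coordinate smoothing parameters `μc i`, selection probabilities `p i`, coordinate
indicators `ω.1` and data batch `ω.2`. -/
def CGE {d : ℕ} {Ω : Type} (F : Euc d → Ω → ℝ) (μc : Fin d → ℝ) (bc : ℕ) (p : Fin d → ℝ)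
    (x : Euc d) (ω : (Fin d → Bool) × (Fin bc → Ω)) : Euc d :=
  ∑ i : Fin d, (((if ω.1 i then (1:ℝ) else 0) / p i) * ((bc : ℝ)⁻¹ *
      ∑ j : Fin bc, (F (x + μc i • EuclideanSpace.single i (1:ℝ)) (ω.2 j)
        - F (x - μc i • EuclideanSpace.single i (1:ℝ)) (ω.2 j)) / (2 * μc i))) •
    EuclideanSpace.single i (1:ℝ)

open ProbabilityTheory

/-!
Coordinatewise, `‖G_c‖² = ∑ᵢ (Zᵢ/pᵢ)² mᵢ²`, where `mᵢ` is the batch mean of the central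
difference quotients `hᵢ = Ĉᵢ F(·, ξ)(x)`. Independence of `Z` and the batch gives
`E‖G_c‖² = ∑ᵢ (1/pᵢ) E mᵢ²`, and for an i.i.d. batch `E mᵢ² = Var hᵢ / b + (E hᵢ)²`.
By `L`-smoothness `|hᵢ - ∂ᵢF| ≤ Lμ/2`, so `(E hᵢ)² ≤ 2 (∂ᵢf)² + 2 (Lμ/2)²` and
`Var hᵢ ≤ E (hᵢ - ∂ᵢf)² ≤ 2ζ² + 2 (Lμ/2)²`.
If `‖G_c‖²` is not integrable its Bochner integral is `0`; if it is, every `hᵢ` is in `L²`,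
because a slice of the batch mean in one sample is an affine image of `hᵢ`.
-/

section CentralDifference

variable {E F : Type*} [NormedAddCommGroup E] [NormedSpace ℝ E] [NormedAddCommGroup F]
  [NormedSpace ℝ F]

theorem norm_sub_sub_two_smul_fderiv_le {g : E → F} {L : ℝ} (hg : Differentiable ℝ g)
    (hlip : ∀ y z, ‖fderiv ℝ g y - fderiv ℝ g z‖ ≤ L * ‖y - z‖) (x v : E) :
    ‖g (x + v) - g (x - v) - (2 : ℝ) • fderiv ℝ g x v‖ ≤ L * ‖v‖ ^ 2 := by
  set φ : ℝ → F := fun t => g (x + t • v) - g (x - t • v) - (2 * t) • fderiv ℝ g x v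
  set φ' : ℝ → F := fun t =>
    fderiv ℝ g (x + t • v) v + fderiv ℝ g (x - t • v) v - (2 : ℝ) • fderiv ℝ g x v
  have hφ : ∀ t, HasDerivAt φ (φ' t) t := by
    intro t
    have hplus : HasDerivAt (fun s : ℝ => x + s • v) v t := by
      simpa using ((hasDerivAt_id t).smul_const v).const_add x
    have hminus : HasDerivAt (fun s : ℝ => x - s • v) (-v) t := by
      simpa using ((hasDerivAt_id t).smul_const v).const_sub x
    have hlin : HasDerivAt (fun s : ℝ => (2 * s) • fderiv ℝ g x v)
        ((2 : ℝ) • fderiv ℝ g x v) t := by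
      simpa using ((hasDerivAt_id t).const_mul (2 : ℝ)).smul_const (fderiv ℝ g x v)
    have := (((hg _).hasFDerivAt.comp_hasDerivAt t hplus).sub
      ((hg _).hasFDerivAt.comp_hasDerivAt t hminus)).sub hlin
    rwa [map_neg, sub_neg_eq_add] at this
  have hbound : ∀ t ∈ Set.Ico (0 : ℝ) 1, ‖φ' t‖ ≤ 2 * L * ‖v‖ ^ 2 * t := by
    intro t ht
    have hdist : ∀ w : E, ‖w - x‖ = t * ‖v‖ →
        ‖fderiv ℝ g w v - fderiv ℝ g x v‖ ≤ L * ‖v‖ ^ 2 * t := by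
      intro w hw
      calc ‖fderiv ℝ g w v - fderiv ℝ g x v‖ = ‖(fderiv ℝ g w - fderiv ℝ g x) v‖ := rfl
        _ ≤ ‖fderiv ℝ g w - fderiv ℝ g x‖ * ‖v‖ := ContinuousLinearMap.le_opNorm _ _
        _ ≤ L * ‖w - x‖ * ‖v‖ := by gcongr; exact hlip w x
        _ = L * ‖v‖ ^ 2 * t := by rw [hw]; ring
    have h1 := hdist (x + t • v) (by simp [norm_smul, abs_of_nonneg ht.1])
    have h2 := hdist (x - t • v) (by simp [norm_smul, abs_of_nonneg ht.1])
    calc ‖φ' t‖ = ‖(fderiv ℝ g (x + t • v) v - fderiv ℝ g x v)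
          + (fderiv ℝ g (x - t • v) v - fderiv ℝ g x v)‖ := by
          simp only [φ']; congr 1; module
      _ ≤ _ := (norm_add_le _ _).trans (by linarith)
  have key := image_norm_le_of_norm_deriv_right_le_deriv_boundary (a := 0) (b := 1)
    (f := φ) (B := fun t => L * ‖v‖ ^ 2 * t ^ 2)
    (fun t _ => (hφ t).continuousAt.continuousWithinAt) (fun t _ => (hφ t).hasDerivWithinAt)
    (by simp [φ]) (fun t => ((hasDerivAt_pow 2 t).const_mul (L * ‖v‖ ^ 2)).congr_deriv (by ring))
    hbound
    (Set.right_mem_Icc.2 zero_le_one)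
  simpa [φ] using key

end CentralDifference

theorem gradient_apply_eq_fderiv_single {d : ℕ} (g : Euc d → ℝ) (x : Euc d) (i : Fin d) :
    gradient g x i = fderiv ℝ g x (EuclideanSpace.single i 1) := by
  rw [gradient, ← InnerProductSpace.toDual_symm_apply (𝕜 := ℝ), EuclideanSpace.inner_single_right]
  simp

theorem LSmooth.norm_fderiv_sub_le {d : ℕ} {g : Euc d → ℝ} {L : ℝ} (hg : LSmooth g L)
    (y z : Euc d) : ‖fderiv ℝ g y - fderiv ℝ g z‖ ≤ L * ‖y - z‖ := by
  have hdual : fderiv ℝ g y - fderiv ℝ g z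
      = InnerProductSpace.toDual ℝ (Euc d) (gradient g y - gradient g z) := by
    simp [gradient, map_sub]
  rw [hdual, LinearIsometryEquiv.norm_map]
  exact hg.2 y z

def centralDiffQuot {d : ℕ} (g : Euc d → ℝ) (μ : ℝ) (x : Euc d) (i : Fin d) : ℝ :=
  (g (x + μ • EuclideanSpace.single i 1) - g (x - μ • EuclideanSpace.single i 1)) / (2 * μ)

theorem LSmooth.abs_centralDiffQuot_sub_gradient_le {d : ℕ} {g : Euc d → ℝ} {L : ℝ}
    (hg : LSmooth g L) (x : Euc d) (i : Fin d) {μ : ℝ} (hμ : 0 < μ) :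
    |centralDiffQuot g μ x i - gradient g x i| ≤ L * μ / 2 := by
  have key := norm_sub_sub_two_smul_fderiv_le hg.1 hg.norm_fderiv_sub_le x
    (μ • EuclideanSpace.single i 1)
  have hnorm : ‖μ • EuclideanSpace.single i (1 : ℝ)‖ = μ := by simp [norm_smul, hμ.le]
  rw [hnorm, map_smul, ← gradient_apply_eq_fderiv_single, Real.norm_eq_abs, smul_eq_mul,
    smul_eq_mul] at key
  have h2μ : 0 < 2 * μ := by positivity
  rw [centralDiffQuot, div_sub' h2μ.ne', abs_div, abs_of_pos h2μ, div_le_iff₀ h2μ]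
  calc _ = |g (x + μ • EuclideanSpace.single i 1) - g (x - μ • EuclideanSpace.single i 1)
        - 2 * (μ * gradient g x i)| := by ring_nf
    _ ≤ L * μ ^ 2 := key
    _ = L * μ / 2 * (2 * μ) := by ring

theorem aemeasurable_fderiv_apply {E : Type*} [NormedAddCommGroup E] [NormedSpace ℝ E]
    {Ω : Type*} [MeasurableSpace Ω] {P : Measure Ω} {F : E → Ω → ℝ} (hF : ∀ y, Measurable (F y))
    {x : E} (hdiff : ∀ᵐ ω ∂P, DifferentiableAt ℝ (fun y => F y ω) x) (v : E) :
    AEMeasurable (fun ω => fderiv ℝ (fun y => F y ω) x v) P := by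
  refine aemeasurable_of_tendsto_metrizable_ae'
    (f := fun (n : ℕ) ω => (n : ℝ) • (F (x + (n : ℝ)⁻¹ • v) ω - F x ω))
    (fun n => (((hF (x + (n : ℝ)⁻¹ • v)).sub (hF x)).const_smul (n : ℝ)).aemeasurable) ?_
  filter_upwards [hdiff] with ω hω
  exact hω.hasFDerivAt.lim v (by simpa using tendsto_natCast_atTop_atTop)

section Bernoulli

variable {p : ℝ}

theorem isProbabilityMeasure_bern (h0 : 0 ≤ p) (h1 : p ≤ 1) : IsProbabilityMeasure (bern p) := by
  constructor
  simp only [bern, Measure.add_apply, Measure.smul_apply, measure_univ, smul_eq_mul, mul_one]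
  rw [← ENNReal.ofReal_add h0 (by linarith)]
  norm_num

theorem integral_bern (h0 : 0 ≤ p) (h1 : p ≤ 1) (f : Bool → ℝ) :
    ∫ z, f z ∂bern p = p * f true + (1 - p) * f false := by
  have hfin : ∀ (c : ℝ) (z : Bool), IsFiniteMeasure (ENNReal.ofReal c • Measure.dirac z) :=
    fun c z => ⟨by simp⟩
  rw [bern, integral_add_measure .of_finite .of_finite, integral_smul_measure,
    integral_smul_measure, integral_dirac, integral_dirac, ENNReal.toReal_ofReal h0,
    ENNReal.toReal_ofReal (by linarith), smul_eq_mul, smul_eq_mul]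

theorem integral_ite_div_sq_bern (h0 : 0 < p) (h1 : p ≤ 1) :
    ∫ z, ((if z then 1 else 0) / p) ^ 2 ∂bern p = 1 / p := by
  rw [integral_bern h0.le h1]
  field_simp
  simp

end Bernoulli

section BatchMean

variable {Ω : Type*} [MeasurableSpace Ω] {P : Measure Ω} [IsProbabilityMeasure P] {h : Ω → ℝ}
  {b : ℕ}

def batchMean (h : Ω → ℝ) (b : ℕ) (ξ : Fin b → Ω) : ℝ :=
  (b : ℝ)⁻¹ * ∑ j, h (ξ j)

theorem memLp_batchMean (hh : MemLp h 2 P) :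
    MemLp (batchMean h b) 2 (Measure.pi fun _ => P) :=
  (memLp_finsetSum _ fun j _ =>
    hh.comp_measurePreserving (measurePreserving_eval (fun _ => P) j)).const_mul _

theorem integral_batchMean (hh : Integrable h P) (hb : b ≠ 0) :
    ∫ ξ, batchMean h b ξ ∂(Measure.pi fun _ => P) = ∫ ω, h ω ∂P := by
  simp only [batchMean]
  rw [integral_const_mul, integral_finsetSum _ fun j _ => integrable_comp_eval hh]
  simp only [integral_comp_eval (μ := fun _ : Fin b => P) hh.aestronglyMeasurable, sum_const,
    card_univ, Fintype.card_fin, nsmul_eq_mul]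
  field_simp

theorem variance_batchMean (hh : MemLp h 2 P) :
    Var[batchMean h b; Measure.pi fun _ => P] = Var[h; P] / b := by
  have hsum : Var[∑ j : Fin b, fun ξ : Fin b → Ω => h (ξ j); Measure.pi fun _ => P]
      = b * Var[h; P] := by
    simp [variance_sum_pi fun _ => hh]
  have hfun : batchMean h b
      = fun ξ => (b : ℝ)⁻¹ * (∑ j : Fin b, fun ξ : Fin b → Ω => h (ξ j)) ξ := by
    ext ξ; simp [batchMean]
  rw [hfun, variance_const_mul, hsum]
  rcases eq_or_ne (b : ℝ) 0 with hb | hb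
  · simp [hb]
  · field_simp

theorem integral_batchMean_sq (hh : MemLp h 2 P) (hb : b ≠ 0) :
    ∫ ξ, batchMean h b ξ ^ 2 ∂(Measure.pi fun _ => P) = Var[h; P] / b + (∫ ω, h ω ∂P) ^ 2 := by
  rw [← variance_batchMean hh, variance_eq_sub (memLp_batchMean hh),
    integral_batchMean (hh.integrable one_le_two) hb]
  simp

theorem memLp_of_memLp_batchMean (hh : AEStronglyMeasurable h P) (hb : b ≠ 0)
    (hmean : MemLp (batchMean h b) 2 (Measure.pi fun _ => P)) : MemLp h 2 P := by
  obtain ⟨n, rfl⟩ := Nat.exists_eq_succ_of_ne_zero hb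
  set e := MeasurableEquiv.piFinSuccAbove (fun _ : Fin (n + 1) => Ω) 0
  have he : MeasurePreserving e.symm (P.prod (Measure.pi fun _ : Fin n => P))
      (Measure.pi fun _ => P) :=
    (measurePreserving_piFinSuccAbove (fun _ : Fin (n + 1) => P) 0).symm
  have hslice : ∀ᵐ y ∂(Measure.pi fun _ : Fin n => P),
      Integrable (fun t => batchMean h (n + 1) (e.symm (t, y)) ^ 2) P :=
    (hmean.comp_measurePreserving he).integrable_sq.prod_left_ae
  obtain ⟨y, hy⟩ := hslice.exists
  have hcons : ∀ t, batchMean h (n + 1) (e.symm (t, y))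
      = (n + 1 : ℝ)⁻¹ * (h t + ∑ j, h (y j)) := by
    intro t
    simp [batchMean, e, MeasurableEquiv.piFinSuccAbove_symm_apply, Fin.insertNthEquiv,
      Fin.sum_univ_succ]
  simp only [hcons] at hy
  have hmem := (memLp_two_iff_integrable_sq
    ((hh.add aestronglyMeasurable_const).const_mul _)).2 hy
  convert (hmem.const_mul (n + 1 : ℝ)).sub (memLp_const (∑ j, h (y j))) using 1
  ext t
  simp [field]

end BatchMean

section SecondMoment

variable {Ω : Type*} [MeasurableSpace Ω] {P : Measure Ω} [IsProbabilityMeasure P] {h g : Ω → ℝ}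
  {κ : ℝ}

theorem memLp_of_ae_abs_sub_le (hh : MemLp h 2 P) (hg : AEStronglyMeasurable g P)
    (hbnd : ∀ᵐ ω ∂P, |h ω - g ω| ≤ κ) : MemLp g 2 P := by
  have hdiff : MemLp (h - g) 2 P :=
    .of_bound (hh.aestronglyMeasurable.sub hg) κ (by simpa [Real.norm_eq_abs] using hbnd)
  simpa using hh.sub hdiff

theorem integral_batchMean_sq_le (hh : MemLp h 2 P) (hg : AEStronglyMeasurable g P)
    (hbnd : ∀ᵐ ω ∂P, |h ω - g ω| ≤ κ) {ζ : ℝ}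
    (hvar : ∫ ω, (g ω - ∫ ω, g ω ∂P) ^ 2 ∂P ≤ ζ ^ 2) {b : ℕ} (hb : b ≠ 0) :
    ∫ ξ, batchMean h b ξ ^ 2 ∂(Measure.pi fun _ => P)
      ≤ 2 * (∫ ω, g ω ∂P) ^ 2 + 2 * κ ^ 2 + (2 * ζ ^ 2 + 2 * κ ^ 2) / b := by
  set a := ∫ ω, g ω ∂P
  have hg2 := memLp_of_ae_abs_sub_le hh hg hbnd
  have hgc : Integrable (fun ω => (g ω - a) ^ 2) P := (hg2.sub (memLp_const a)).integrable_sq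
  have hsq : ∀ᵐ ω ∂P, (h ω - g ω) ^ 2 ≤ κ ^ 2 := by
    filter_upwards [hbnd] with ω hω
    exact sq_le_sq' (abs_le.1 hω).1 (abs_le.1 hω).2
  have hbias : (∫ ω, h ω ∂P - a) ^ 2 ≤ κ ^ 2 := by
    have habs : |∫ ω, h ω ∂P - a| ≤ κ := by
      rw [← integral_sub (hh.integrable one_le_two) (hg2.integrable one_le_two)]
      simpa using norm_integral_le_of_norm_le_const (μ := P) (f := fun ω => h ω - g ω) hbnd
    exact sq_le_sq' (abs_le.1 habs).1 (abs_le.1 habs).2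
  have hspread : Var[h; P] ≤ 2 * ζ ^ 2 + 2 * κ ^ 2 :=
    calc Var[h; P] = Var[fun ω => h ω - a; P] :=
          (variance_sub_const hh.aestronglyMeasurable a).symm
      _ ≤ ∫ ω, (h ω - a) ^ 2 ∂P :=
          variance_le_expectation_sq (hh.aestronglyMeasurable.sub aestronglyMeasurable_const)
      _ ≤ ∫ ω, (2 * (g ω - a) ^ 2 + 2 * κ ^ 2) ∂P := by
          refine integral_mono_ae (hh.sub (memLp_const a)).integrable_sq
            ((hgc.const_mul 2).add (integrable_const _)) ?_
          filter_upwards [hsq] with ω hω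
          nlinarith [sq_nonneg (h ω - g ω - (g ω - a))]
      _ = 2 * ∫ ω, (g ω - a) ^ 2 ∂P + 2 * κ ^ 2 := by
          rw [integral_add (hgc.const_mul 2) (integrable_const _), integral_const_mul]
          simp
      _ ≤ 2 * ζ ^ 2 + 2 * κ ^ 2 := by linarith
  rw [integral_batchMean_sq hh hb]
  have hmean : (∫ ω, h ω ∂P) ^ 2 ≤ 2 * a ^ 2 + 2 * κ ^ 2 := by
    nlinarith [sq_nonneg (∫ ω, h ω ∂P - 2 * a)]
  have hvar_div : Var[h; P] / b ≤ (2 * ζ ^ 2 + 2 * κ ^ 2) / b := by gcongr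
  linarith

end SecondMoment

theorem Integrable.of_mul_prod {α β : Type*} [MeasurableSpace α] [MeasurableSpace β]
    {μ : Measure α} {ν : Measure β} [SFinite μ] [SFinite ν] {φ : α → ℝ} {ψ : β → ℝ}
    (h : Integrable (fun z : α × β => φ z.1 * ψ z.2) (μ.prod ν)) (hφ : μ {x | φ x ≠ 0} ≠ 0) :
    Integrable ψ ν := by
  obtain ⟨x, hx, hint⟩ : ∃ x, φ x ≠ 0 ∧ Integrable (fun y => φ x * ψ y) ν := by
    by_contra! hne
    exact hφ (measure_mono_null (fun x hx => hne x hx) (ae_iff.1 h.prod_right_ae))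
  simpa [hx] using hint.const_mul (φ x)⁻¹

theorem EuclideanSpace.norm_sq_sum_smul_single {ι : Type*} [Fintype ι] [DecidableEq ι]
    (r : ι → ℝ) : ‖∑ i, r i • EuclideanSpace.single i (1 : ℝ)‖ ^ 2 = ∑ i, r i ^ 2 := by
  rw [EuclideanSpace.norm_sq_eq]
  simp [Pi.single_apply]

section CGE

variable {d : ℕ} {Ω : Type} {F : Euc d → Ω → ℝ} {μc : Fin d → ℝ} {b : ℕ} {p : Fin d → ℝ}
  {x : Euc d}

theorem norm_CGE_sq (ω : (Fin d → Bool) × (Fin b → Ω)) :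
    ‖CGE F μc b p x ω‖ ^ 2 = ∑ i, ((if ω.1 i then 1 else 0) / p i) ^ 2
      * batchMean (fun t => centralDiffQuot (F · t) (μc i) x i) b ω.2 ^ 2 := by
  rw [CGE, EuclideanSpace.norm_sq_sum_smul_single]
  simp only [batchMean, centralDiffQuot, mul_pow]

variable [MeasurableSpace Ω] {P : Measure Ω} [IsProbabilityMeasure P]

theorem integral_norm_CGE_sq (hp : ∀ i, 0 < p i ∧ p i ≤ 1)
    (hh : ∀ i, MemLp (fun t => centralDiffQuot (F · t) (μc i) x i) 2 P) :
    ∫ ω, ‖CGE F μc b p x ω‖ ^ 2 ∂CGEmeas d P b p = ∑ i, 1 / p i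
      * ∫ ξ, batchMean (fun t => centralDiffQuot (F · t) (μc i) x i) b ξ ^ 2
          ∂(Measure.pi fun _ => P) := by
  have := fun i => isProbabilityMeasure_bern (hp i).1.le (hp i).2
  simp_rw [norm_CGE_sq]
  rw [CGEmeas, integral_finsetSum]
  swap
  · exact fun i _ => Integrable.mul_prod
      (f := fun z : Fin d → Bool => ((if z i then 1 else 0) / p i) ^ 2) .of_finite
      (memLp_batchMean (hh i)).integrable_sq
  refine sum_congr rfl fun i _ => (integral_prod_mul
    (fun z : Fin d → Bool => ((if z i then 1 else 0) / p i) ^ 2)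
    (fun ξ => batchMean (fun t => centralDiffQuot (F · t) (μc i) x i) b ξ ^ 2)).trans ?_
  rw [integral_comp_eval (μ := fun i => bern (p i))
      (f := fun s : Bool => ((if s then 1 else 0) / p i) ^ 2)
      (measurable_of_countable _).aestronglyMeasurable,
    integral_ite_div_sq_bern (hp i).1 (hp i).2]

theorem memLp_centralDiffQuot_of_integrable_norm_CGE_sq (hp : ∀ i, 0 < p i ∧ p i ≤ 1)
    (hF : ∀ y, Measurable (F y)) (hb : b ≠ 0)
    (hint : Integrable (fun ω => ‖CGE F μc b p x ω‖ ^ 2) (CGEmeas d P b p)) (i : Fin d) :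
    MemLp (fun t => centralDiffQuot (F · t) (μc i) x i) 2 P := by
  have := fun i => isProbabilityMeasure_bern (hp i).1.le (hp i).2
  set h := fun t => centralDiffQuot (F · t) (μc i) x i
  have hh_meas : Measurable h := ((hF _).sub (hF _)).div_const _
  have hmean_meas : Measurable (batchMean h b) :=
    (Finset.measurable_sum _ fun j _ => hh_meas.comp (measurable_pi_apply j)).const_mul _
  have hterm : Integrable (fun ω : (Fin d → Bool) × (Fin b → Ω) =>
      ((if ω.1 i then 1 else 0) / p i) ^ 2 * batchMean h b ω.2 ^ 2) (CGEmeas d P b p) := by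
    refine hint.mono' (((measurable_of_countable
      (fun z : Fin d → Bool => ((if z i then (1 : ℝ) else 0) / p i) ^ 2)).comp measurable_fst).mul
      ((hmean_meas.pow_const 2).comp measurable_snd)).aestronglyMeasurable (ae_of_all _ fun ω => ?_)
    rw [norm_CGE_sq, Real.norm_of_nonneg (by positivity)]
    exact single_le_sum (f := fun j => ((if ω.1 j then 1 else 0) / p j) ^ 2
      * batchMean (fun t => centralDiffQuot (F · t) (μc j) x j) b ω.2 ^ 2)
      (fun j _ => by positivity) (mem_univ i)
  have hsel : Measure.pi (fun i => bern (p i))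
      {z | ((if z i then (1 : ℝ) else 0) / p i) ^ 2 ≠ 0} ≠ 0 := by
    have hset : {z : Fin d → Bool | ((if z i then (1 : ℝ) else 0) / p i) ^ 2 ≠ 0}
        = Function.eval i ⁻¹' ({true} : Set Bool) := by
      ext z
      simp [(hp i).1.ne']
    rw [hset, (measurePreserving_eval _ i).measure_preimage
      (measurableSet_singleton _).nullMeasurableSet]
    simp [bern, (hp i).1]
  exact memLp_of_memLp_batchMean hh_meas.aestronglyMeasurable hb
    ((memLp_two_iff_integrable_sq hmean_meas.aestronglyMeasurable).2
      (Integrable.of_mul_prod hterm hsel))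

end CGE

theorem cge_second_moment_bound_general
    (d : ℕ)
    {Ω : Type} [MeasurableSpace Ω] (P : Measure Ω) [IsProbabilityMeasure P]
    (L ζ : ℝ)
    (F : Euc d → Ω → ℝ)
    (hFmeas : Measurable (Function.uncurry F))
    (hFsmooth : ∀ᵐ ω ∂P, LSmooth (fun x => F x ω) L)
    (f : Euc d → ℝ)
    (hgradf : ∀ x, gradient f x = ∫ ω, gradient (fun y => F y ω) x ∂P)
    (hvar : ∀ (x : Euc d) (i : Fin d),
      ∫ ω, (gradient (fun y => F y ω) x i - gradient f x i) ^ 2 ∂P ≤ ζ ^ 2)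
    (μc : ℝ) (hμc : 0 < μc)
    (bc : ℕ) (hbc : 1 ≤ bc)
    (p : Fin d → ℝ) (hp : ∀ i, 0 < p i ∧ p i ≤ 1)
    (x : Euc d) :
    ∫ ω, ‖CGE F (fun _ => μc) bc p x ω‖ ^ 2 ∂(CGEmeas d P bc p)
      ≤ ∑ i : Fin d, (1 / p i) * (2 * (gradient f x i) ^ 2
          + 3 * ζ ^ 2 / (bc : ℝ)
          + (L ^ 2 * μc ^ 2 / 2) * (1 + 3 / (bc : ℝ))) := by
  have hF : ∀ y, Measurable (F y) := fun y => hFmeas.comp measurable_prodMk_left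
  by_cases hint : Integrable (fun ω => ‖CGE F (fun _ => μc) bc p x ω‖ ^ 2) (CGEmeas d P bc p)
  swap
  · rw [integral_undef hint]
    exact sum_nonneg fun i _ => mul_nonneg (one_div_nonneg.2 (hp i).1.le) (by positivity)
  have hb : bc ≠ 0 := by omega
  set h : Fin d → Ω → ℝ := fun i t => centralDiffQuot (F · t) μc x i
  set g : Fin d → Ω → ℝ := fun i t => gradient (F · t) x i
  have hh : ∀ i, MemLp (h i) 2 P := memLp_centralDiffQuot_of_integrable_norm_CGE_sq hp hF hb hint
  have hbnd : ∀ i, ∀ᵐ t ∂P, |h i t - g i t| ≤ L * μc / 2 := fun i =>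
    hFsmooth.mono fun t ht => ht.abs_centralDiffQuot_sub_gradient_le x i hμc
  have hg : ∀ i, AEStronglyMeasurable (g i) P := fun i => by
    simp only [g, gradient_apply_eq_fderiv_single]
    exact (aemeasurable_fderiv_apply hF (hFsmooth.mono fun t ht => ht.1 x) _).aestronglyMeasurable
  have hmean : ∀ i, ∫ t, g i t ∂P = gradient f x i := fun i => by
    rw [hgradf, eval_integral_piLp fun j =>
      (memLp_of_ae_abs_sub_le (hh j) (hg j) (hbnd j)).integrable one_le_two]
  rw [integral_norm_CGE_sq hp hh]
  gcongr with i
  · exact one_div_nonneg.2 (hp i).1.le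
  have hmoment := integral_batchMean_sq_le (hh i) (hg i) (hbnd i)
    (by simpa only [hmean] using hvar x i) hb
  rw [hmean] at hmoment
  refine hmoment.trans ?_
  have hb1 : (1 : ℝ) ≤ bc := by exact_mod_cast hbc
  field_simp
  nlinarith [sq_nonneg ζ, sq_nonneg (L * μc)]

/-- **Proposition 4, bound IV: second moment of the importance-sampled CGE**
(with a common smoothing parameter `μ_c` for all coordinates). -/
theorem cge_second_moment_bound
    (d : ℕ) (hd : 1 ≤ d)
    {Ω : Type} [MeasurableSpace Ω] (P : Measure Ω) [IsProbabilityMeasure P]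
    (L ζ : ℝ) (hL : 0 ≤ L) (hζ : 0 ≤ ζ)
    (F : Euc d → Ω → ℝ)
    (hFmeas : Measurable (Function.uncurry F))
    (hFsmooth : ∀ᵐ ω ∂P, LSmooth (fun x => F x ω) L)
    (f : Euc d → ℝ) (hfdef : ∀ x, f x = ∫ ω, F x ω ∂P)
    (hfsmooth : LSmooth f L)
    (hgradf : ∀ x, gradient f x = ∫ ω, gradient (fun y => F y ω) x ∂P)
    (hvar : ∀ (x : Euc d) (i : Fin d),
      ∫ ω, (gradient (fun y => F y ω) x i - gradient f x i) ^ 2 ∂P ≤ ζ ^ 2)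
    (μc : ℝ) (hμc : 0 < μc)
    (bc : ℕ) (hbc : 1 ≤ bc)
    (p : Fin d → ℝ) (hp : ∀ i, 0 < p i ∧ p i ≤ 1)
    (x : Euc d) :
    ∫ ω, ‖CGE F (fun _ => μc) bc p x ω‖ ^ 2 ∂(CGEmeas d P bc p)
      ≤ ∑ i : Fin d, (1 / p i) * (2 * (gradient f x i) ^ 2
          + 3 * ζ ^ 2 / (bc : ℝ)
          + (L ^ 2 * μc ^ 2 / 2) * (1 + 3 / (bc : ℝ))) :=
  cge_second_moment_bound_general d P L ζ F hFmeas hFsmooth f hgradf hvar μc hμc bc hbc p hp x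
end
end

section
/- Let f : ℝ^d → ℝ be differentiable and σ̄-strongly convex with σ̄ > 0, and let x* be its global minimizer. Then for every x ∈ ℝ^d and every g ∈ ℝ^d: ⟨g, x* − x⟩ ≤ (1/σ̄) ‖g − ∇f(x)‖² − (f(x) − f(x*)) − (σ̄/4) ‖x − x*‖². -/
open MeasureTheory Finset
open scoped RealInnerProductSpace ENNReal

noncomputable section

/-- **Strong-convexity inner-product bound (eq. (S-dist-to-opt, step (c))):**
for a differentiable `σ̄`-strongly convex `f` with global minimizer `x*`, any `x` and any
vector `g`, `⟨g, x* − x⟩ ≤ (1/σ̄)‖g − ∇f(x)‖² − (f(x) − f(x*)) − (σ̄/4)‖x − x*‖²`. -/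
theorem strong_convex_inner_product_bound
    (d : ℕ) (σb : ℝ) (hσb : 0 < σb)
    (f : Euc d → ℝ) (hdiff : Differentiable ℝ f)
    (hsc : ∀ x y : Euc d, f y ≥ f x + ⟪gradient f x, y - x⟫ + σb / 2 * ‖y - x‖ ^ 2)
    (xstar : Euc d) (hmin : ∀ y, f xstar ≤ f y)
    (x g : Euc d) :
    ⟪g, xstar - x⟫
      ≤ (1 / σb) * ‖g - gradient f x‖ ^ 2 - (f x - f xstar) - (σb / 4) * ‖x - xstar‖ ^ 2 := by
  have h1 : ⟪gradient f x, xstar - x⟫ ≤ f xstar - f x - σb / 2 * ‖xstar - x‖ ^ 2 := by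
    have := hsc x xstar
    linarith
  have h2 : ⟪g - gradient f x, xstar - x⟫
      ≤ (1 / σb) * ‖g - gradient f x‖ ^ 2 + (σb / 4) * ‖xstar - x‖ ^ 2 := by
    have hc : ⟪g - gradient f x, xstar - x⟫ ≤ ‖g - gradient f x‖ * ‖xstar - x‖ :=
      real_inner_le_norm _ _
    have hy : ‖g - gradient f x‖ * ‖xstar - x‖
        ≤ (1 / σb) * ‖g - gradient f x‖ ^ 2 + (σb / 4) * ‖xstar - x‖ ^ 2 := by
      rw [div_mul_eq_mul_div, div_add' _ _ _ hσb.ne', le_div_iff₀ hσb, one_mul]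
      nlinarith [sq_nonneg (2 * ‖g - gradient f x‖ - σb * ‖xstar - x‖)]
    linarith
  have hsplit : ⟪g, xstar - x⟫
      = ⟪g - gradient f x, xstar - x⟫ + ⟪gradient f x, xstar - x⟫ := by
    rw [inner_sub_left]; ring
  have hn : ‖xstar - x‖ = ‖x - xstar‖ := norm_sub_rev _ _
  rw [hn] at h1 h2
  linarith [hsplit]
end
end

section
/- Let σ̄ > 0, a > 1, A ≥ 0, B ≥ 0, and let (a_t)_{t≥0} and (e_t)_{t≥0} be sequences of non-negative reals satisfying a_{t+1} ≤ (1 − η_t σ̄ / 2) a_t − η_t e_t + η_t A + η_t² B for all t ≥ 0, where η_t := 8 / (σ̄ (a + t)). Define w_t := (a + t)² and S_T := Σ_{t=0}^{T−1} w_t. Then for every T ≥ 1: S_T ≥ T³/3 and (1/S_T) Σ_{t=0}^{T−1} w_t e_t ≤ A + (4 T (T + 2a) / (σ̄ S_T)) B + (a³ σ̄ / (8 S_T)) a_0. -/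
open Finset

lemma cube_sum_lb : ∀ n : ℕ, (n : ℝ) ^ 3 / 3 ≤ ∑ t ∈ Finset.range n, (1 + (t : ℝ)) ^ 2 := by
  intro n
  induction n with
  | zero => simp
  | succ k ih =>
    rw [Finset.sum_range_succ]
    push_cast
    nlinarith [ih, Nat.cast_nonneg (α := ℝ) k]

lemma lin_sum_ub (a : ℝ) (ha : 1 < a) :
    ∀ n : ℕ, ∑ t ∈ Finset.range n, (a + (t : ℝ)) ≤ (n : ℝ) * ((n : ℝ) + 2 * a) / 2 := by
  intro n
  induction n with
  | zero => simp
  | succ k ih =>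
    rw [Finset.sum_range_succ]
    push_cast
    nlinarith [ih]

set_option maxHeartbeats 1600000 in
/-- **Lemma 2 (weighted recursion lemma, after Stich):** for non-negative sequences
`(a_t)`, `(e_t)` satisfying `a_{t+1} ≤ (1 − η_t σ̄/2) a_t − η_t e_t + η_t A + η_t² B`
with `η_t = 8/(σ̄ (a + t))`, the weights `w_t = (a + t)²` and `S_T = Σ_{t<T} w_t` satisfy
`S_T ≥ T³/3` and
`(1/S_T) Σ_{t<T} w_t e_t ≤ A + (4T(T+2a)/(σ̄ S_T)) B + (a³ σ̄/(8 S_T)) a_0`. -/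
theorem weighted_recursion_bound
    (σb a A B : ℝ) (hσb : 0 < σb) (ha : 1 < a) (hA : 0 ≤ A) (hB : 0 ≤ B)
    (aseq eseq : ℕ → ℝ) (haseq : ∀ t, 0 ≤ aseq t) (heseq : ∀ t, 0 ≤ eseq t)
    (hrec : ∀ t : ℕ, aseq (t + 1)
      ≤ (1 - (8 / (σb * (a + (t : ℝ)))) * σb / 2) * aseq t
        - (8 / (σb * (a + (t : ℝ)))) * eseq t
        + (8 / (σb * (a + (t : ℝ)))) * A
        + (8 / (σb * (a + (t : ℝ)))) ^ 2 * B)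
    (T : ℕ) (hT : 1 ≤ T) :
    (T : ℝ) ^ 3 / 3 ≤ (∑ t ∈ Finset.range T, (a + (t : ℝ)) ^ 2) ∧
    (∑ t ∈ Finset.range T, (a + (t : ℝ)) ^ 2)⁻¹ *
        (∑ t ∈ Finset.range T, (a + (t : ℝ)) ^ 2 * eseq t)
      ≤ A
        + (4 * (T : ℝ) * ((T : ℝ) + 2 * a) / (σb * ∑ t ∈ Finset.range T, (a + (t : ℝ)) ^ 2)) * B
        + (a ^ 3 * σb / (8 * ∑ t ∈ Finset.range T, (a + (t : ℝ)) ^ 2)) * aseq 0 := by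
  set S : ℝ := ∑ t ∈ Finset.range T, (a + (t : ℝ)) ^ 2 with hSdef
  -- Part 1
  have hpart1 : (T : ℝ) ^ 3 / 3 ≤ S := by
    calc (T : ℝ) ^ 3 / 3 ≤ ∑ t ∈ Finset.range T, (1 + (t : ℝ)) ^ 2 := cube_sum_lb T
    _ ≤ S := by
      apply Finset.sum_le_sum
      intro t _
      have := Nat.cast_nonneg (α := ℝ) t
      nlinarith
  have hT1 : (1 : ℝ) ≤ (T : ℝ) := by exact_mod_cast hT
  have hS : 0 < S := by nlinarith [hpart1, hT1, mul_nonneg (by linarith : (0:ℝ) ≤ (T:ℝ) - 1) (by nlinarith : (0:ℝ) ≤ (T:ℝ)^2 + (T:ℝ) + 1)]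
  refine ⟨hpart1, ?_⟩
  -- telescoping function
  set f : ℕ → ℝ := fun t => σb ^ 2 * (a + (t : ℝ) - 1) ^ 3 * aseq t with hf
  -- per-step inequality
  have step : ∀ t : ℕ, 8 * σb * ((a + (t : ℝ)) ^ 2 * eseq t)
      ≤ (f t - f (t + 1)) + 8 * σb * A * (a + (t : ℝ)) ^ 2 + 64 * B * (a + (t : ℝ)) := by
    intro t
    have ht0 : (0 : ℝ) ≤ (t : ℝ) := Nat.cast_nonneg t
    have hx : (1 : ℝ) < a + t := by linarith
    have hx0 : (0 : ℝ) < a + t := by linarith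
    have h := hrec t
    have h2 := mul_le_mul_of_nonneg_left h
      (by positivity : (0 : ℝ) ≤ σb ^ 2 * (a + (t : ℝ)) ^ 2)
    have hR : σb ^ 2 * (a + (t : ℝ)) ^ 2 *
        ((1 - (8 / (σb * (a + (t : ℝ)))) * σb / 2) * aseq t
          - (8 / (σb * (a + (t : ℝ)))) * eseq t
          + (8 / (σb * (a + (t : ℝ)))) * A
          + (8 / (σb * (a + (t : ℝ)))) ^ 2 * B)
        = σb ^ 2 * (a + (t : ℝ)) ^ 2 * aseq t - 4 * σb ^ 2 * (a + (t : ℝ)) * aseq t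
          - 8 * σb * (a + (t : ℝ)) * eseq t + 8 * σb * (a + (t : ℝ)) * A + 64 * B := by
      field_simp
      ring
    rw [hR] at h2
    have h3 := mul_le_mul_of_nonneg_right h2 hx0.le
    have h4 : σb ^ 2 * ((a + (t : ℝ)) ^ 3 - 4 * (a + (t : ℝ)) ^ 2) * aseq t
        ≤ σb ^ 2 * (a + (t : ℝ) - 1) ^ 3 * aseq t := by
      nlinarith [haseq t, sq_nonneg σb, mul_nonneg (mul_nonneg (sq_nonneg σb) (haseq t))
        (by nlinarith : (0 : ℝ) ≤ (a + (t : ℝ)) ^ 2 + 3 * (a + (t : ℝ)) - 1)]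
    simp only [hf]
    push_cast
    linarith [h3, h4]
  have hsum := Finset.sum_le_sum (fun t (_ : t ∈ Finset.range T) => step t)
  rw [← Finset.mul_sum] at hsum
  have hrhs : ∑ t ∈ Finset.range T,
      ((f t - f (t + 1)) + 8 * σb * A * (a + (t : ℝ)) ^ 2 + 64 * B * (a + (t : ℝ)))
      = (f 0 - f T) + 8 * σb * A * S + 64 * B * (∑ t ∈ Finset.range T, (a + (t : ℝ))) := by
    rw [Finset.sum_add_distrib, Finset.sum_add_distrib, Finset.sum_range_sub' f,
      ← Finset.mul_sum, ← Finset.mul_sum]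
  rw [hrhs] at hsum
  -- bound pieces
  have hf0 : f 0 ≤ σb ^ 2 * a ^ 3 * aseq 0 := by
    simp only [hf]
    have h1 : (0 : ℝ) ≤ 3 * a ^ 2 - 3 * a + 1 := by nlinarith
    have h2 := mul_nonneg (mul_nonneg (sq_nonneg σb) (haseq 0)) h1
    push_cast
    linarith [h2]
  have hfT : 0 ≤ f T := by
    simp only [hf]
    have h0 : (0 : ℝ) ≤ a + (T : ℝ) - 1 := by linarith
    exact mul_nonneg (mul_nonneg (sq_nonneg σb) (pow_nonneg h0 3)) (haseq T)
  have hlin := lin_sum_ub a ha T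
  have hlinB : 64 * B * (∑ t ∈ Finset.range T, (a + (t : ℝ)))
      ≤ 64 * B * ((T : ℝ) * ((T : ℝ) + 2 * a) / 2) :=
    mul_le_mul_of_nonneg_left hlin (by linarith)
  -- finish
  have hSR : S * (A + (4 * (T : ℝ) * ((T : ℝ) + 2 * a) / (σb * S)) * B
      + (a ^ 3 * σb / (8 * S)) * aseq 0)
      = (σb ^ 2 * a ^ 3 * aseq 0 + 8 * σb * A * S + 32 * (T : ℝ) * ((T : ℝ) + 2 * a) * B)
        / (8 * σb) := by
    field_simp
    ring
  rw [inv_mul_le_iff₀ hS, hSR, le_div_iff₀ (by positivity : (0 : ℝ) < 8 * σb)]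
  linarith [hsum, hf0, hfT, hlinB]
end
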